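/- Violation of purification in the toy model for d_A = 2: the state ω = (1/2)(|0,0⟩⟨0,0| + |1,1⟩⟨1,1|) on ℂ² ⊗ ℂ² is a convex combination of states |ψ⟩⟨ψ|^{⊗2} (namely of |0⟩⟨0|^{⊗2} and |1⟩⟨1|^{⊗2}), but it is not equal to any toy-model reduced state ω_A of a pure bipartite state: for every finite d_B and every unit vector ψ ∈ ℂ² ⊗ ℂ^{d_B}, ω_A(ψ) = S(ρ⊗ρ)S + (1 − Tr(S(ρ⊗ρ)S))·S/3 ≠ ω, where ρ = Tr_B|ψ⟩⟨ψ| and S is the symmetric projector on ℂ²⊗ℂ². -/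

import Mathlib

/-!
Write ρ = [[a, b], [b̄, 1 - a]]. Since S is idempotent and Tr(SWAP (A ⊗ B)) = Tr(AB), the
trace t = Tr(S(ρ⊗ρ)S) equals (1 + Tr ρ²)/2, and the (00,00) and (01,01) entries of ω_A are
a² + (1 - t)/3 and (a(1 - a) + |b|²)/2 + (1 - t)/6. Matching them with the entries 1/2 and 0
of ω forces a = 1/2 and then |b|² = -1/2.
-/

open Matrix BigOperators
open scoped Kronecker ComplexConjugate

noncomputable section

def swapMat (I : Type*) [DecidableEq I] [Fintype I] : Matrix (I × I) (I × I) ℂ :=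
  fun p q => if p.1 = q.2 ∧ p.2 = q.1 then 1 else 0

def symProj (I : Type*) [DecidableEq I] [Fintype I] : Matrix (I × I) (I × I) ℂ :=
  (2⁻¹ : ℂ) • (1 + swapMat I)

def asymProj (I : Type*) [DecidableEq I] [Fintype I] : Matrix (I × I) (I × I) ℂ :=
  (2⁻¹ : ℂ) • (1 - swapMat I)

/-- reordering (1,2,3,4) ↦ (1,3,2,4) of tensor factors -/
def reorder (A B : Type*) : ((A × B) × (A × B)) ≃ ((A × A) × (B × B)) where
  toFun x := ((x.1.1, x.2.1), (x.1.2, x.2.2))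
  invFun y := ((y.1.1, y.2.1), (y.1.2, y.2.2))
  left_inv x := rfl
  right_inv y := rfl

/-- |ψ⟩⟨ψ| -/
def outer {I : Type*} (ψ : I → ℂ) : Matrix I I ℂ := fun i j => ψ i * conj (ψ j)

/-- ψ ⊗ ψ -/
def vec2 {I : Type*} (ψ : I → ℂ) : I × I → ℂ := fun p => ψ p.1 * ψ p.2

/-- |ψ⟩⟨ψ|^{⊗2} -/
def pure2 {I : Type*} (ψ : I → ℂ) : Matrix (I × I) (I × I) ℂ := outer (vec2 ψ)

def unitVec {I : Type*} [Fintype I] (ψ : I → ℂ) : Prop := ∑ i, Complex.normSq (ψ i) = 1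

/-- partial trace over the second factor -/
def ptraceB {A B : Type*} [Fintype B] (M : Matrix (A × B) (A × B) ℂ) : Matrix A A ℂ :=
  fun a a' => ∑ b, M (a, b) (a', b)

/-- reindex an operator on (ℂ^A ⊗ ℂ^B)^{⊗2} as an operator on (ℂ^A)^{⊗2} ⊗ (ℂ^B)^{⊗2} -/
def reindexAB {A B : Type*} (M : Matrix ((A × B) × (A × B)) ((A × B) × (A × B)) ℂ) :
    Matrix ((A × A) × (B × B)) ((A × A) × (B × B)) ℂ :=
  M.submatrix (reorder A B).symm (reorder A B).symm

/-- standard basis vectors of ℂ² -/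
def e2 (i : Fin 2) : Fin 2 → ℂ := fun j => if j = i then 1 else 0


section Symmetrization

variable {I : Type*} [DecidableEq I] [Fintype I]

theorem swapMat_eq_toMatrix : swapMat I = (Equiv.prodComm I I).toPEquiv.toMatrix := by
  ext p q
  simp [swapMat, PEquiv.toMatrix_apply, Prod.ext_iff, eq_comm, and_comm]

theorem swapMat_mul_apply (X : Matrix (I × I) (I × I) ℂ) (p q : I × I) :
    (swapMat I * X) p q = X p.swap q := by
  rw [swapMat_eq_toMatrix, PEquiv.toMatrix_toPEquiv_mul]
  rfl

theorem mul_swapMat_apply (X : Matrix (I × I) (I × I) ℂ) (p q : I × I) :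
    (X * swapMat I) p q = X p q.swap := by
  rw [swapMat_eq_toMatrix, PEquiv.mul_toMatrix_toPEquiv]
  rfl

theorem swapMat_mul_swapMat : swapMat I * swapMat I = 1 := by
  ext p q
  rw [swapMat_mul_apply]
  simp [swapMat, one_apply, Prod.ext_iff, and_comm]

theorem symProj_mul_symProj : symProj I * symProj I = symProj I := by
  simp only [symProj, smul_mul_smul_comm, add_mul, mul_add, one_mul, mul_one,
    swapMat_mul_swapMat]
  ext p q
  simp only [Matrix.smul_apply, Matrix.add_apply, smul_eq_mul]
  ring

theorem symProj_mul_mul_symProj_apply (X : Matrix (I × I) (I × I) ℂ) (i j k l : I) :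
    (symProj I * X * symProj I) (i, j) (k, l) =
      4⁻¹ * (X (i, j) (k, l) + X (i, j) (l, k) + X (j, i) (k, l) + X (j, i) (l, k)) := by
  simp only [symProj, Matrix.smul_mul, Matrix.mul_smul, Matrix.add_mul, Matrix.mul_add,
    Matrix.one_mul, Matrix.mul_one, Matrix.smul_apply, Matrix.add_apply, swapMat_mul_apply,
    mul_swapMat_apply, Prod.swap_prod_mk, smul_eq_mul]
  ring

theorem trace_swapMat_mul_kronecker (A B : Matrix I I ℂ) :
    (swapMat I * (A ⊗ₖ B)).trace = (A * B).trace := by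
  rw [trace, Fintype.sum_prod_type, Finset.sum_comm]
  simp only [diag, swapMat_mul_apply, kroneckerMap_apply, Prod.swap_prod_mk]
  rfl

theorem trace_symProj_mul_kronecker_mul_symProj (A : Matrix I I ℂ) :
    (symProj I * (A ⊗ₖ A) * symProj I).trace = 2⁻¹ * (A.trace ^ 2 + (A * A).trace) := by
  rw [trace_mul_comm, ← Matrix.mul_assoc, symProj_mul_symProj, symProj, smul_mul, add_mul,
    one_mul, trace_smul, trace_add, trace_kronecker, trace_swapMat_mul_kronecker, sq,
    smul_eq_mul]

end Symmetrization

theorem trace_ptraceB {A B : Type*} [Fintype A] [Fintype B] (M : Matrix (A × B) (A × B) ℂ) :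
    (ptraceB M).trace = M.trace := by
  rw [trace, trace, Fintype.sum_prod_type]
  rfl

theorem Matrix.IsHermitian.ptraceB {A B : Type*} [Fintype B] {M : Matrix (A × B) (A × B) ℂ}
    (hM : M.IsHermitian) : (ptraceB M).IsHermitian := by
  ext a a'
  simp only [conjTranspose_apply, _root_.ptraceB, star_sum, hM.apply]

theorem isHermitian_outer {I : Type*} (ψ : I → ℂ) : (outer ψ).IsHermitian := by
  ext i j
  simp [outer, mul_comm]

theorem unitVec.trace_outer {I : Type*} [Fintype I] {ψ : I → ℂ} (hψ : unitVec ψ) :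
    (outer ψ).trace = 1 := by
  simp only [trace, diag, outer, Complex.mul_conj]
  exact_mod_cast hψ

theorem unitVec_e2 (i : Fin 2) : unitVec (e2 i) := by
  fin_cases i <;> simp [unitVec, e2]

theorem smul_pure2_add_smul_pure2_mem_convexHull :
    (2⁻¹ : ℂ) • pure2 (e2 0) + (2⁻¹ : ℂ) • pure2 (e2 1) ∈
      convexHull ℝ {M : Matrix (Fin 2 × Fin 2) (Fin 2 × Fin 2) ℂ |
        ∃ χ : Fin 2 → ℂ, unitVec χ ∧ M = pure2 χ} := by
  refine segment_subset_convexHull (x := pure2 (e2 0)) (y := pure2 (e2 1)) ?_ ?_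
    ⟨2⁻¹, 2⁻¹, by norm_num, by norm_num, by norm_num, ?_⟩
  · exact ⟨e2 0, unitVec_e2 0, rfl⟩
  · exact ⟨e2 1, unitVec_e2 1, rfl⟩
  · simp only [← Complex.coe_smul, Complex.ofReal_inv, Complex.ofReal_ofNat]

def toyReducedState (ρ : Matrix (Fin 2) (Fin 2) ℂ) : Matrix (Fin 2 × Fin 2) (Fin 2 × Fin 2) ℂ :=
  symProj (Fin 2) * (ρ ⊗ₖ ρ) * symProj (Fin 2) +
    (1 - (symProj (Fin 2) * (ρ ⊗ₖ ρ) * symProj (Fin 2)).trace) • ((3⁻¹ : ℂ) • symProj (Fin 2))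

theorem toyReducedState_ne_of_isHermitian {ρ : Matrix (Fin 2) (Fin 2) ℂ} (hρ : ρ.IsHermitian)
    (htr : ρ.trace = 1) :
    toyReducedState ρ ≠ (2⁻¹ : ℂ) • pure2 (e2 0) + (2⁻¹ : ℂ) • pure2 (e2 1) := by
  intro h
  set t := (symProj (Fin 2) * (ρ ⊗ₖ ρ) * symProj (Fin 2)).trace with ht
  have entry (i j : Fin 2) := congr_fun₂ h (i, j) (i, j)
  simp only [toyReducedState, Matrix.add_apply, symProj_mul_mul_symProj_apply,
    Matrix.smul_apply, kroneckerMap_apply, ← ht] at entry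
  have h00 : ρ 0 0 ^ 2 + (1 - t) / 3 = 2⁻¹ := by
    have e := entry 0 0
    simp only [symProj, swapMat, pure2, outer, vec2, e2, Matrix.smul_apply, Matrix.add_apply,
      one_apply_eq, and_self, zero_ne_one, ↓reduceIte, smul_eq_mul, mul_one,
      mul_zero, map_one, map_zero, add_zero] at e
    linear_combination e
  have h01 : (ρ 0 0 * ρ 1 1 + ρ 0 1 * ρ 1 0) / 2 + (1 - t) / 6 = 0 := by
    have e := entry 0 1
    simp only [symProj, swapMat, pure2, outer, vec2, e2, Matrix.smul_apply, Matrix.add_apply,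
      one_apply_eq, and_self, zero_ne_one, one_ne_zero, ↓reduceIte, smul_eq_mul, mul_one,
      mul_zero, map_zero, add_zero] at e
    linear_combination e
  rw [trace_symProj_mul_kronecker_mul_symProj, htr] at ht
  simp only [trace_fin_two, mul_apply, Fin.sum_univ_two] at ht
  have hρ11 : ρ 1 1 = 1 - ρ 0 0 := by
    rw [trace_fin_two] at htr
    linear_combination htr
  rw [hρ11] at h01 ht
  have hρ00 : ρ 0 0 = 2⁻¹ := by
    linear_combination h00 + h01 + ht / 2
  have hnormSq : (Complex.normSq (ρ 0 1) : ℂ) = ((-2⁻¹ : ℝ) : ℂ) := by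
    rw [← Complex.mul_conj, ← Complex.star_def, hρ.apply 1 0]
    push_cast
    linear_combination 3 * h01 + ht / 2 + 2 * (ρ 0 0 - 2⁻¹) * hρ00
  linarith [Complex.normSq_nonneg (ρ 0 1), Complex.ofReal_inj.mp hnormSq]

theorem stmt_18 (ω : Matrix (Fin 2 × Fin 2) (Fin 2 × Fin 2) ℂ)
    (hω : ω = (2⁻¹ : ℂ) • pure2 (e2 0) + (2⁻¹ : ℂ) • pure2 (e2 1)) :
    (ω ∈ convexHull ℝ {M : Matrix (Fin 2 × Fin 2) (Fin 2 × Fin 2) ℂ |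
        ∃ χ : Fin 2 → ℂ, unitVec χ ∧ M = pure2 χ}) ∧
      ∀ (dB : ℕ) (ψ : Fin 2 × Fin dB → ℂ), unitVec ψ →
        ∀ ρ : Matrix (Fin 2) (Fin 2) ℂ, ρ = ptraceB (outer ψ) →
          symProj (Fin 2) * (ρ ⊗ₖ ρ) * symProj (Fin 2) +
              (1 - (symProj (Fin 2) * (ρ ⊗ₖ ρ) * symProj (Fin 2)).trace) •
                ((3⁻¹ : ℂ) • symProj (Fin 2)) ≠ ω := by
  subst hω
  refine ⟨smul_pure2_add_smul_pure2_mem_convexHull, ?_⟩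
  rintro dB ψ hψ ρ rfl
  exact toyReducedState_ne_of_isHermitian (isHermitian_outer ψ).ptraceB
    (by rw [trace_ptraceB, hψ.trace_outer])
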